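/- arXiv:0804.3541 — 9 statements merged into one kernel-verified Lean document; each statement's English description precedes it below -/
import Mathlib

section
/- For every integer n with n ≥ 6 and n ≡ 2 (mod 4), there exists a 2-subset-regular self-complementary 3-uniform hypergraph on n vertices. -/
/-!
Write `n = 2m` with `m` odd and take two copies `L`, `R` of `ℤ/m` (or of any abelian group of order
`m`) as vertices. A triple is an edge if it lies in `L`; if it consists of `a, b ∈ L` and `c ∈ R`
with `2c = a + b`; or if it consists of `a ∈ L` and `b, c ∈ R` with `2a ≠ b + c`. Exchanging `L`
and `R` maps the edges of each kind of triple exactly onto the non-edges of the mirrored kind, so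
the hypergraph is self-complementary. As `2` is invertible mod `m`, a pair in `L` lies in `m - 2`
edges inside `L` and in one more through its midpoint in `R`, and a pair in `R` lies in the `m - 1`
edges through the non-midpoints of `L`. For a pair `a ∈ L`, `b ∈ R` the reflection `t ↦ a + b - t`
carries the third vertices in `R` completing it to an edge onto the third vertices in `L` that do
not, so again `m - 1` edges remain.
-/

open Finset Sum

namespace Finset

variable {α β : Type*}

def IsSelfComplementary [DecidableEq α] (k : ℕ) (E : Finset (Finset α)) : Prop :=
  ∃ τ : Equiv.Perm α, ∀ e : Finset α, #e = k → (e ∈ E ↔ e.image τ ∉ E)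

def IsSubsetRegular [DecidableEq α] (t : ℕ) (E : Finset (Finset α)) : Prop :=
  ∃ lam : ℕ, ∀ s : Finset α, #s = t → #(E.filter (s ⊆ ·)) = lam

theorem sized_map_finsetCongr {k : ℕ} {E : Finset (Finset α)}
    (h : (E : Set (Finset α)).Sized k) (f : α ≃ β) :
    (E.map f.finsetCongr.toEmbedding : Set (Finset β)).Sized k := by
  intro _ he
  obtain ⟨e, heE, rfl⟩ := mem_map.1 he
  simpa using h heE

lemma image_permCongr_finsetCongr [DecidableEq α] [DecidableEq β] (f : α ≃ β)
    (τ : Equiv.Perm α) (e : Finset α) :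
    (f.finsetCongr e).image (f.permCongr τ) = f.finsetCongr (e.image τ) := by
  simp only [Equiv.finsetCongr_apply, map_eq_image, Equiv.coe_toEmbedding]
  rw [image_image, image_image]
  congr 1
  funext x
  simp

theorem IsSelfComplementary.map [DecidableEq α] [DecidableEq β] {k : ℕ}
    {E : Finset (Finset α)} (h : IsSelfComplementary k E) (f : α ≃ β) :
    IsSelfComplementary k (E.map f.finsetCongr.toEmbedding) := by
  obtain ⟨τ, hτ⟩ := h
  refine ⟨f.permCongr τ, f.finsetCongr.forall_congr_right.mp fun e he => ?_⟩
  rw [image_permCongr_finsetCongr]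
  simpa only [mem_map_equiv, Equiv.symm_apply_apply] using hτ e (by simpa using he)

theorem IsSubsetRegular.map [DecidableEq α] [DecidableEq β] {t : ℕ} {E : Finset (Finset α)}
    (h : IsSubsetRegular t E) (f : α ≃ β) :
    IsSubsetRegular t (E.map f.finsetCongr.toEmbedding) := by
  obtain ⟨lam, hlam⟩ := h
  refine ⟨lam, f.finsetCongr.forall_congr_right.mp fun s hs => ?_⟩
  rw [filter_map, card_map]
  convert hlam s (by simpa using hs) using 2
  ext e
  simp [Function.comp_def]

theorem card_filter_powersetCard_succ_superset [DecidableEq α] [Fintype α] {k : ℕ}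
    (P : Finset α → Prop) [DecidablePred P] {s : Finset α} (hs : #s = k) :
    #(((powersetCard (k + 1) univ).filter P).filter (s ⊆ ·)) =
      #{w | w ∉ s ∧ P (insert w s)} := by
  symm
  refine card_bij (fun w _ => insert w s) ?_ ?_ ?_
  · simp only [mem_filter, mem_univ, true_and, mem_powersetCard_univ]
    rintro w ⟨hw, hP⟩
    exact ⟨⟨by rw [card_insert_of_notMem hw, hs], hP⟩, subset_insert w s⟩
  · simp only [mem_filter, mem_univ, true_and]
    rintro w ⟨hw, -⟩ w' - h
    exact (mem_insert.1 (h ▸ mem_insert_self w s)).resolve_right hw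
  · simp only [mem_filter, mem_univ, true_and, mem_powersetCard_univ]
    rintro e ⟨⟨he, hP⟩, hse⟩
    obtain ⟨w, hw⟩ := card_eq_one.mp (show #(e \ s) = 1 by rw [card_sdiff_of_subset hse]; omega)
    have hwe : w ∈ e \ s := hw ▸ mem_singleton_self w
    have hinsert : insert w s = e := by
      rw [← sdiff_union_of_subset hse, hw]
      rfl
    exact ⟨w, ⟨(mem_sdiff.1 hwe).2, hinsert ▸ hP⟩, hinsert⟩

theorem card_filter_univ_sum [Fintype α] [Fintype β] (p : α ⊕ β → Prop) [DecidablePred p] :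
    #{w | p w} = #{a | p (inl a)} + #{b | p (inr b)} := by
  simp only [card_filter, Fintype.sum_sum_type]

@[simp] lemma toLeft_singleton_inl (a : α) : ({inl a} : Finset (α ⊕ β)).toLeft = {a} := by
  ext; simp

@[simp] lemma toLeft_singleton_inr (b : β) : ({inr b} : Finset (α ⊕ β)).toLeft = ∅ := by
  ext; simp

@[simp] lemma toRight_singleton_inl (a : α) : ({inl a} : Finset (α ⊕ β)).toRight = ∅ := by
  ext; simp

@[simp] lemma toRight_singleton_inr (b : β) : ({inr b} : Finset (α ⊕ β)).toRight = {b} := by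
  ext; simp

end Finset

lemma card_filter_two_nsmul_eq {G : Type*} [AddCommGroup G] [Fintype G] [DecidableEq G]
    (hG : Odd (Fintype.card G)) (c : G) : #{x : G | 2 • x = c} = 1 := by
  have hbij : Function.Bijective (2 • · : G → G) :=
    Nat.Coprime.nsmul_right_bijective (by simpa [Nat.card_eq_fintype_card] using hG)
  obtain ⟨x₀, rfl⟩ := hbij.2 c
  exact card_eq_one.2 ⟨x₀, by ext x; simpa using hbij.1.eq_iff⟩

namespace MidpointHypergraph

variable {G : Type*} [AddCommGroup G] [DecidableEq G]

/-- `inl` and `inr` are the two copies `L` and `R` of `G`. -/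
def IsEdge (e : Finset (G ⊕ G)) : Prop :=
  #e.toRight = 0 ∨
  (#e.toRight = 1 ∧ 2 • ∑ y ∈ e.toRight, y = ∑ x ∈ e.toLeft, x) ∨
  (#e.toRight = 2 ∧ 2 • ∑ x ∈ e.toLeft, x ≠ ∑ y ∈ e.toRight, y)

instance : DecidablePred (IsEdge (G := G)) := fun _ => by unfold IsEdge; infer_instance

lemma isEdge_image_swap {e : Finset (G ⊕ G)} (he : #e = 3) :
    IsEdge (e.image Sum.swap) ↔ ¬ IsEdge e := by
  have hcard := card_toLeft_add_card_toRight (u := e)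
  simp only [IsEdge, toLeft_image_swap, toRight_image_swap]
  rcases (by omega : #e.toRight = 0 ∨ #e.toRight = 1 ∨ #e.toRight = 2 ∨ #e.toRight = 3)
    with h | h | h | h <;>
  · have : #e.toLeft = 3 - #e.toRight := by omega
    simp [h, this]

variable [Fintype G]

def link (s : Finset (G ⊕ G)) : Finset (G ⊕ G) :=
  {w | w ∉ s ∧ IsEdge (insert w s)}

lemma card_link_inl_inl (hG : Odd (Fintype.card G)) {a b : G} (hab : a ≠ b) :
    #(link {inl a, inl b}) = Fintype.card G - 1 := by
  have hcard : 2 ≤ Fintype.card G := by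
    simpa [card_pair hab] using card_le_univ {a, b}
  have hl : ∀ x, (inl x ∉ ({inl a, inl b} : Finset (G ⊕ G)) ∧
      IsEdge (insert (inl x) {inl a, inl b})) ↔ x ∉ ({a, b} : Finset G) := by
    simp [IsEdge]
  have hr : ∀ y, (inr y ∉ ({inl a, inl b} : Finset (G ⊕ G)) ∧
      IsEdge (insert (inr y) {inl a, inl b})) ↔ 2 • y = a + b := by
    simp [IsEdge, sum_pair hab]
  rw [link, card_filter_univ_sum]
  simp only [hl, hr]
  rw [filter_notMem_eq_sdiff, card_univ_sdiff, card_pair hab, card_filter_two_nsmul_eq hG]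
  omega

lemma card_link_inl_inr (a b : G) : #(link {inl a, inr b}) = Fintype.card G - 1 := by
  have hl : ∀ x, (inl x ∉ ({inl a, inr b} : Finset (G ⊕ G)) ∧
      IsEdge (insert (inl x) {inl a, inr b})) ↔ x ≠ a ∧ 2 • b = x + a := by
    intro x
    by_cases hx : x = a <;> simp [IsEdge, hx]
  have hr : ∀ y, (inr y ∉ ({inl a, inr b} : Finset (G ⊕ G)) ∧
      IsEdge (insert (inr y) {inl a, inr b})) ↔ y ≠ b ∧ 2 • a ≠ y + b := by
    intro y
    by_cases hy : y = b <;> simp [IsEdge, hy]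
  have hreflect : #{y | y ≠ b ∧ 2 • a ≠ y + b} = #{x | x ≠ a ∧ ¬ 2 • b = x + a} :=
    card_equiv (Equiv.subLeft (a + b)) fun y => by
      simp only [mem_filter, mem_univ, true_and, Equiv.subLeft_apply]
      grind
  rw [link, card_filter_univ_sum]
  simp only [hl, hr]
  rw [hreflect, ← filter_filter, ← filter_filter, card_filter_add_card_filter_not, filter_ne',
    card_erase_of_mem (mem_univ a), card_univ]

lemma card_link_inr_inr (hG : Odd (Fintype.card G)) {a b : G} (hab : a ≠ b) :
    #(link {inr a, inr b}) = Fintype.card G - 1 := by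
  have hl : ∀ x, (inl x ∉ ({inr a, inr b} : Finset (G ⊕ G)) ∧
      IsEdge (insert (inl x) {inr a, inr b})) ↔ ¬ 2 • x = a + b := by
    simp [IsEdge, card_pair hab, sum_pair hab]
  have hr : ∀ y, (inr y ∉ ({inr a, inr b} : Finset (G ⊕ G)) ∧
      IsEdge (insert (inr y) {inr a, inr b})) ↔ False := by
    simp +contextual [IsEdge, card_insert_of_notMem, card_pair hab]
  have hsplit := card_filter_add_card_filter_not (s := univ) (2 • · = a + b)
  rw [link, card_filter_univ_sum]
  simp only [hl, hr, filter_false, card_empty]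
  rw [card_filter_two_nsmul_eq hG, card_univ] at hsplit
  omega

def edges (G : Type*) [AddCommGroup G] [DecidableEq G] [Fintype G] : Finset (Finset (G ⊕ G)) :=
  (powersetCard 3 univ).filter IsEdge

theorem sized_edges : (edges G : Set (Finset (G ⊕ G))).Sized 3 :=
  Set.Sized.mono (filter_subset _ _) (Set.sized_powersetCard _ _)

theorem isSelfComplementary_edges : IsSelfComplementary 3 (edges G) := by
  refine ⟨Equiv.sumComm G G, fun e he => ?_⟩
  have himage : #(e.image (Equiv.sumComm G G)) = 3 := by
    rw [card_image_of_injective _ (Equiv.injective _), he]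
  simp only [edges, mem_filter, mem_powersetCard_univ, he, himage, true_and]
  exact iff_not_comm.1 (isEdge_image_swap he)

theorem isSubsetRegular_edges (hG : Odd (Fintype.card G)) : IsSubsetRegular 2 (edges G) := by
  refine ⟨Fintype.card G - 1, fun s hs =>
    (card_filter_powersetCard_succ_superset IsEdge hs).trans ?_⟩
  obtain ⟨u, v, huv, rfl⟩ := card_eq_two.1 hs
  rcases u with a | a <;> rcases v with b | b
  · exact card_link_inl_inl hG (by simpa using huv)
  · exact card_link_inl_inr a b
  · rw [pair_comm]
    exact card_link_inl_inr b a
  · exact card_link_inr_inr hG (by simpa using huv)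

end MidpointHypergraph

theorem exists_two_subset_regular_self_complementary_three_hypergraph_general
    (n : ℕ) (hmod : n % 4 = 2) :
    ∃ E : Finset (Finset (Fin n)),
      (∀ e ∈ E, e.card = 3) ∧
      (∃ τ : Equiv.Perm (Fin n), ∀ e : Finset (Fin n), e.card = 3 →
        (e ∈ E ↔ e.image τ ∉ E)) ∧
      (∃ lam : ℕ, ∀ s : Finset (Fin n), s.card = 2 →
        (E.filter (fun e => s ⊆ e)).card = lam) := by
  have : NeZero (n / 2) := ⟨by omega⟩
  have hodd : Odd (Fintype.card (ZMod (n / 2))) := by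
    rw [ZMod.card]
    exact Nat.odd_iff.2 (by omega)
  let f : ZMod (n / 2) ⊕ ZMod (n / 2) ≃ Fin n := Fintype.equivOfCardEq (by
    rw [Fintype.card_sum, ZMod.card, Fintype.card_fin]
    omega)
  exact ⟨_, sized_map_finsetCongr MidpointHypergraph.sized_edges f,
    MidpointHypergraph.isSelfComplementary_edges.map f,
    (MidpointHypergraph.isSubsetRegular_edges hodd).map f⟩

/-- For every integer `n` with `n ≥ 6` and `n ≡ 2 (mod 4)`, there exists a
2-subset-regular self-complementary 3-uniform hypergraph on `n` vertices.
A 3-uniform hypergraph on `Fin n` is a set `E` of 3-element subsets of `Fin n`;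
it is self-complementary if some permutation `τ` maps edges exactly onto
non-edges (among 3-element subsets), and 2-subset-regular if every 2-element
subset of the vertex set lies in exactly `lam` edges, for some constant `lam`. -/
theorem exists_two_subset_regular_self_complementary_three_hypergraph
    (n : ℕ) (hn : 6 ≤ n) (hmod : n % 4 = 2) :
    ∃ E : Finset (Finset (Fin n)),
      (∀ e ∈ E, e.card = 3) ∧
      (∃ τ : Equiv.Perm (Fin n), ∀ e : Finset (Fin n), e.card = 3 →
        (e ∈ E ↔ e.image τ ∉ E)) ∧
      (∃ lam : ℕ, ∀ s : Finset (Fin n), s.card = 2 →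
        (E.filter (fun e => s ⊆ e)).card = lam) :=
  exists_two_subset_regular_self_complementary_three_hypergraph_general n hmod
end

section
/- If there exists a 2-subset-regular self-complementary 3-uniform hypergraph on n vertices (with n ≥ 3), then n ≡ 2 (mod 4). -/
/-!
`τ` maps the non-edges through a pair `s` onto the edges through `τ s`, so the `n - 2`
triples through `s` split into two classes of size `λ`: `2λ = n - 2`. Counting the
edges through a vertex `v` together with a second vertex gives `(n - 1) λ = 2 deg v`. Hence `n`
is even, so `n - 1` is odd and `λ` is even, i.e. `4 ∣ n - 2`.
-/

open Finset

section

variable {α : Type*} [Fintype α] [DecidableEq α]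

lemma card_filter_superset_notMem_eq {k : ℕ} {E : Finset (Finset α)}
    (hE : ∀ e ∈ E, #e = k) {τ : Equiv.Perm α}
    (hτ : ∀ e : Finset α, #e = k → (e ∈ E ↔ e.image τ ∉ E)) (s : Finset α) :
    #{e ∈ univ.powersetCard k | s ⊆ e ∧ e ∉ E} = #{e ∈ E | s.image τ ⊆ e} := by
  have symm_image (e : Finset α) : (e.image τ).image τ.symm = e := by
    rw [image_image, Equiv.symm_comp_self, image_id]
  have image_symm (f : Finset α) : (f.image τ.symm).image τ = f := by
    rw [image_image, Equiv.self_comp_symm, image_id]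
  refine card_nbij' (·.image τ) (·.image τ.symm) (fun e he => ?_) (fun f hf => ?_)
    (fun e _ => symm_image e) (fun f _ => image_symm f)
  · simp only [coe_filter, mem_powersetCard_univ, Set.mem_ofPred_eq] at he ⊢
    exact ⟨not_not.mp (mt (hτ e he.1).mpr he.2.2), image_subset_image he.2.1⟩
  · simp only [coe_filter, mem_powersetCard_univ, Set.mem_ofPred_eq] at hf ⊢
    have hcard : #(f.image τ.symm) = k := by
      rw [card_image_of_injective _ τ.symm.injective, hE f hf.1]
    refine ⟨hcard, symm_image s ▸ image_subset_image hf.2, fun hmem => ?_⟩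
    exact (hτ _ hcard).mp hmem (by rw [image_symm]; exact hf.1)

lemma card_filter_superset_add_card_filter_image_superset {k : ℕ} {E : Finset (Finset α)}
    (hE : ∀ e ∈ E, #e = k) {τ : Equiv.Perm α}
    (hτ : ∀ e : Finset α, #e = k → (e ∈ E ↔ e.image τ ∉ E)) {s : Finset α} (hs : #s ≤ k) :
    #{e ∈ E | s ⊆ e} + #{e ∈ E | s.image τ ⊆ e} =
      (Fintype.card α - #s).choose (k - #s) := by
  have hedges : {e ∈ (univ : Finset α).powersetCard k | s ⊆ e ∧ e ∈ E} = {e ∈ E | s ⊆ e} := by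
    ext e
    simp only [mem_filter, mem_powersetCard_univ]
    exact ⟨fun h => ⟨h.2.2, h.2.1⟩, fun h => ⟨hE e h.1, h.2, h.1⟩⟩
  calc #{e ∈ E | s ⊆ e} + #{e ∈ E | s.image τ ⊆ e}
      = #{e ∈ univ.powersetCard k | s ⊆ e ∧ e ∈ E} +
          #{e ∈ univ.powersetCard k | s ⊆ e ∧ e ∉ E} := by
        rw [hedges, card_filter_superset_notMem_eq hE hτ s]
    _ = #{e ∈ univ.powersetCard k | s ⊆ e} := by
        rw [← filter_filter, ← filter_filter, card_filter_add_card_filter_not]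
    _ = (Fintype.card α - #s).choose (k - #s) := by
        rw [card_filter_powersetCard_subset s univ k (subset_univ s) hs, card_univ]

lemma card_sub_one_mul_eq_card_filter_mem_mul {k lam : ℕ} {E : Finset (Finset α)}
    (hE : ∀ e ∈ E, #e = k)
    (hreg : ∀ s : Finset α, #s = 2 → #{e ∈ E | s ⊆ e} = lam) (v : α) :
    (Fintype.card α - 1) * lam = #{e ∈ E | v ∈ e} * (k - 1) := by
  rw [← card_univ, ← card_erase_of_mem (mem_univ v)]
  refine card_mul_eq_card_mul (· ∈ ·) (fun u hu => ?_) (fun e he => ?_)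
  · rw [← hreg {v, u} (card_pair (ne_of_mem_erase hu).symm)]
    congr 1
    ext e
    simp [bipartiteAbove, insert_subset_iff, and_assoc]
  · rw [mem_filter] at he
    rw [← hE e he.1, ← card_erase_of_mem he.2]
    congr 1
    ext u
    simp [bipartiteBelow, and_comm]

end

/-- If there exists a 2-subset-regular self-complementary 3-uniform hypergraph
on `n` vertices (with `n ≥ 3`), then `n ≡ 2 (mod 4)`. -/
theorem mod_four_of_two_subset_regular_self_complementary (n : ℕ) (hn : 3 ≤ n)
    (h : ∃ E : Finset (Finset (Fin n)),
      (∀ e ∈ E, e.card = 3) ∧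
      (∃ τ : Equiv.Perm (Fin n), ∀ e : Finset (Fin n), e.card = 3 →
        (e ∈ E ↔ e.image τ ∉ E)) ∧
      (∃ lam : ℕ, ∀ s : Finset (Fin n), s.card = 2 →
        (E.filter (fun e => s ⊆ e)).card = lam)) :
    n % 4 = 2 := by
  obtain ⟨E, hE, ⟨τ, hτ⟩, ⟨lam, hreg⟩⟩ := h
  let a : Fin n := ⟨0, by omega⟩
  let b : Fin n := ⟨1, by omega⟩
  have hab : #{a, b} = 2 := card_pair (by simp [a, b, Fin.ext_iff])
  have hpair : lam + lam = n - 2 := by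
    have := card_filter_superset_add_card_filter_image_superset hE hτ (by omega : #{a, b} ≤ 3)
    rwa [hreg _ hab, hreg _ (by rwa [card_image_of_injective _ τ.injective]), hab,
      Fintype.card_fin, Nat.choose_one_right] at this
  have hvertex := card_sub_one_mul_eq_card_filter_mem_mul hE hreg a
  rw [Fintype.card_fin] at hvertex
  have hlam_even : Even lam := by
    have hodd : ¬Even (n - 1) := by rw [Nat.not_even_iff_odd]; exact ⟨lam, by omega⟩
    exact (Nat.even_mul.mp (hvertex ▸ even_two.mul_left _)).resolve_left hodd
  obtain ⟨m, hm⟩ := hlam_even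
  omega
end

section
/- If there exists a self-complementary t-subset-regular k-uniform hypergraph on n vertices (with t < k < n), then the binomial coefficient C(n − i, k − i) is even for every i with 0 ≤ i ≤ t. -/
/-!
Counting pairs (edge, vertex outside `s`) shows that subset-regularity descends from
level `t` to every level `i ≤ t`, say with valence `λᵢ`. For an `i`-set `s`, the complementing
permutation `τ` maps the edges containing `τ⁻¹ s` bijectively onto the non-edges containing
`s`, so the `C(n - i, k - i)` many `k`-sets containing `s` split into `λᵢ` edges and `λᵢ`
non-edges.
-/

open Finset

variable {α : Type*} [DecidableEq α]

theorem Finset.image_symm_image {β : Type*} [DecidableEq β] (τ : α ≃ β) (s : Finset β) :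
    (s.image τ.symm).image τ = s := by
  rw [image_image, Equiv.self_comp_symm, image_id]

theorem Finset.image_image_symm {β : Type*} [DecidableEq β] (τ : α ≃ β) (s : Finset α) :
    (s.image τ).image τ.symm = s := by
  rw [image_image, Equiv.symm_comp_self, image_id]

namespace Hypergraph

def degree (E : Finset (Finset α)) (s : Finset α) : ℕ := #{e ∈ E | s ⊆ e}

def IsSubsetRegular (E : Finset (Finset α)) (t : ℕ) : Prop :=
  ∃ lam, ∀ s : Finset α, #s = t → degree E s = lam

variable [Fintype α] {E : Finset (Finset α)} {k t : ℕ}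

theorem degree_mul_eq_card_compl_mul {s : Finset α} {lam : ℕ}
    (hE : (E : Set (Finset α)).Sized k)
    (hs : ∀ x ∉ s, degree E (insert x s) = lam) :
    degree E s * (k - #s) = #sᶜ * lam := by
  refine card_mul_eq_card_mul (fun e x => x ∈ e) (fun e he => ?_) (fun x hx => ?_)
  · obtain ⟨heE, hse⟩ := mem_filter.mp he
    rw [bipartiteAbove, filter_mem_eq_inter, inter_comm, ← sdiff_eq_inter_compl,
      card_sdiff_of_subset hse, hE heE]
  · rw [bipartiteBelow, filter_filter, ← hs x (mem_compl.mp hx), degree]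
    simp only [insert_subset_iff, and_comm]

theorem IsSubsetRegular.of_succ (hE : (E : Set (Finset α)).Sized k) (htk : t < k)
    (h : IsSubsetRegular E (t + 1)) : IsSubsetRegular E t := by
  obtain ⟨lam, hlam⟩ := h
  refine ⟨(Fintype.card α - t) * lam / (k - t), fun s hs => Nat.eq_div_of_mul_eq_left
    (by omega) ?_⟩
  rw [← hs, ← card_compl]
  exact degree_mul_eq_card_compl_mul hE fun x hx => hlam _ (by rw [card_insert_of_notMem hx, hs])

theorem IsSubsetRegular.of_le {i : ℕ} (hE : (E : Set (Finset α)).Sized k) (htk : t < k)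
    (h : IsSubsetRegular E t) (hit : i ≤ t) : IsSubsetRegular E i :=
  Nat.decreasingInduction (motive := fun j _ => IsSubsetRegular E j)
    (fun _ hj ih => ih.of_succ hE (by omega)) h hit

theorem degree_image_symm_eq_card_nonedges {τ : Equiv.Perm α}
    (hE : (E : Set (Finset α)).Sized k)
    (hτ : ∀ e : Finset α, #e = k → (e ∈ E ↔ e.image τ ∉ E)) (s : Finset α) :
    degree E (s.image τ.symm) = #{e ∈ powersetCard k univ | s ⊆ e ∧ e ∉ E} := by
  refine card_nbij' (·.image τ) (·.image τ.symm) (fun e he => ?_) (fun e he => ?_)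
    (fun e _ => image_image_symm τ e) (fun e _ => image_symm_image τ e)
  · simp only [coe_filter, Set.mem_ofPred_eq, mem_powersetCard_univ] at he ⊢
    obtain ⟨heE, hse⟩ := he
    refine ⟨card_image_of_injective e τ.injective ▸ hE heE, ?_, (hτ e (hE heE)).mp heE⟩
    exact image_symm_image τ s ▸ image_subset_image hse
  · simp only [coe_filter, Set.mem_ofPred_eq, mem_powersetCard_univ] at he ⊢
    obtain ⟨hek, hse, heE⟩ := he
    have hk : #(e.image τ.symm) = k := card_image_of_injective e τ.symm.injective ▸ hek
    refine ⟨?_, image_subset_image hse⟩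
    rwa [hτ _ hk, image_symm_image]

theorem choose_eq_degree_add_degree_image_symm {τ : Equiv.Perm α}
    (hE : (E : Set (Finset α)).Sized k)
    (hτ : ∀ e : Finset α, #e = k → (e ∈ E ↔ e.image τ ∉ E)) {s : Finset α}
    (hsk : #s ≤ k) :
    (Fintype.card α - #s).choose (k - #s) = degree E s + degree E (s.image τ.symm) := by
  rw [← card_univ, ← card_filter_powersetCard_subset s univ k (subset_univ s) hsk,
    degree_image_symm_eq_card_nonedges hE hτ, ← card_filter_add_card_filter_not (· ∈ E),
    filter_filter, filter_filter, degree]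
  congr 2
  ext e
  simp only [mem_filter, mem_powersetCard_univ]
  exact ⟨fun h => ⟨h.2.2, h.2.1⟩, fun h => ⟨hE h.1, h.2, h.1⟩⟩

end Hypergraph

open Hypergraph

/-- If there exists a self-complementary `t`-subset-regular `k`-uniform
hypergraph on `n` vertices (with `t < k < n`), then `C(n - i, k - i)` is even
for every `i` with `0 ≤ i ≤ t`. -/
theorem choose_even_of_self_complementary_subset_regular
    (n k t : ℕ) (htk : t < k) (hkn : k < n)
    (E : Finset (Finset (Fin n)))
    (huniform : ∀ e ∈ E, e.card = k)
    (hsc : ∃ τ : Equiv.Perm (Fin n), ∀ e : Finset (Fin n), e.card = k →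
      (e ∈ E ↔ e.image τ ∉ E))
    (hreg : ∃ lam : ℕ, ∀ s : Finset (Fin n), s.card = t →
      (E.filter (fun e => s ⊆ e)).card = lam) :
    ∀ i ≤ t, Even ((n - i).choose (k - i)) := by
  intro i hit
  obtain ⟨τ, hτ⟩ := hsc
  have hE : (E : Set (Finset (Fin n))).Sized k := huniform
  obtain ⟨lam, hlam⟩ := IsSubsetRegular.of_le hE htk hreg hit
  obtain ⟨s, -, hs⟩ :=
    exists_subset_card_eq (s := (univ : Finset (Fin n))) (n := i) (by simp; omega)
  have hs' : #(s.image τ.symm) = i := by rw [card_image_of_injective s τ.symm.injective, hs]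
  have hsplit := choose_eq_degree_add_degree_image_symm hE hτ (hs.trans_le (by omega))
  rw [Fintype.card_fin, hs, hlam s hs, hlam _ hs'] at hsplit
  exact ⟨lam, hsplit⟩
end

section
/- If a k-uniform hypergraph on n vertices is self-complementary and t-subset-regular with t-valence λ (where t < k < n), then λ = C(n − t, k − t)/2; in particular, C(n − t, k − t) is even. -/
/-!
Fix a `t`-set `s`. The `k`-sets containing `s` number `C(n - t, k - t)`; `λ` of them are edges.
The complementing permutation `τ` maps the edges bijectively onto the non-edges, and the
non-edges containing `s` are the images of the edges containing `τ⁻¹ s`, so there are also `λ`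
of them. Hence `C(n - t, k - t) = 2λ`.
-/

open Finset

namespace Finset

variable {α : Type*} [DecidableEq α]

theorem card_filter_eq_card_filter_add_card_filter_sdiff {E P : Finset α} (hE : E ⊆ P)
    (p : α → Prop) [DecidablePred p] :
    #{e ∈ P | p e} = #{e ∈ E | p e} + #{e ∈ P \ E | p e} := by
  rw [← card_union_of_disjoint (disjoint_filter_filter disjoint_sdiff), ← filter_union,
    union_sdiff_of_subset hE]

theorem subset_image_perm_iff (τ : Equiv.Perm α) (s e : Finset α) :
    s ⊆ e.image τ ↔ s.image τ.symm ⊆ e := by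
  rw [← image_subset_image_iff τ.symm.injective, image_image]
  simp

theorem card_filter_subset_image_perm (E : Finset (Finset α)) (τ : Equiv.Perm α)
    (s : Finset α) :
    #{e ∈ E.image (image τ) | s ⊆ e} = #{e ∈ E | s.image τ.symm ⊆ e} := by
  simp only [filter_image, card_image_of_injective _ (image_injective τ.injective),
    subset_image_perm_iff]

theorem image_image_perm_eq_powersetCard_sdiff [Fintype α] {k : ℕ} {E : Finset (Finset α)}
    (hE : E ⊆ powersetCard k univ) (τ : Equiv.Perm α)
    (hτ : ∀ e : Finset α, #e = k → (e ∈ E ↔ e.image τ ∉ E)) :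
    E.image (image τ) = powersetCard k univ \ E := by
  ext f
  simp only [mem_image, mem_sdiff, mem_powersetCard_univ]
  constructor
  · rintro ⟨e, he, rfl⟩
    have hek : #e = k := mem_powersetCard_univ.1 (hE he)
    exact ⟨by rw [card_image_of_injective _ τ.injective, hek], (hτ e hek).1 he⟩
  · rintro ⟨hfk, hf⟩
    have hτf : (f.image τ.symm).image τ = f := by simp [image_image]
    refine ⟨f.image τ.symm, ?_, hτf⟩
    rw [hτ _ (by rw [card_image_of_injective _ τ.symm.injective, hfk]), hτf]
    exact hf

end Finset

/-- If a `k`-uniform hypergraph on `n` vertices is self-complementary and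
`t`-subset-regular with `t`-valence `lam` (where `t < k < n`), then
`lam = C(n - t, k - t) / 2`; in particular, `C(n - t, k - t)` is even. -/
theorem valence_eq_choose_div_two_of_self_complementary
    (n k t : ℕ) (htk : t < k) (hkn : k < n)
    (E : Finset (Finset (Fin n)))
    (huniform : ∀ e ∈ E, e.card = k)
    (hsc : ∃ τ : Equiv.Perm (Fin n), ∀ e : Finset (Fin n), e.card = k →
      (e ∈ E ↔ e.image τ ∉ E))
    (lam : ℕ)
    (hreg : ∀ s : Finset (Fin n), s.card = t →
      (E.filter (fun e => s ⊆ e)).card = lam) :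
    lam = (n - t).choose (k - t) / 2 ∧ Even ((n - t).choose (k - t)) := by
  obtain ⟨τ, hτ⟩ := hsc
  obtain ⟨s, -, hs⟩ := exists_subset_card_eq (s := (univ : Finset (Fin n))) (n := t)
    (by rw [card_univ, Fintype.card_fin]; omega)
  have hE : E ⊆ powersetCard k univ := fun e he => mem_powersetCard_univ.2 (huniform e he)
  have hτs : #(s.image τ.symm) = t := by rw [card_image_of_injective _ τ.symm.injective, hs]
  have hsum : (n - t).choose (k - t) = lam + lam :=
    calc (n - t).choose (k - t) = #{e ∈ powersetCard k univ | s ⊆ e} := by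
          rw [card_filter_powersetCard_subset s univ k (subset_univ s) (by omega), card_univ,
            Fintype.card_fin, hs]
      _ = #{e ∈ E | s ⊆ e} + #{e ∈ E.image (image τ) | s ⊆ e} := by
          rw [card_filter_eq_card_filter_add_card_filter_sdiff hE,
            image_image_perm_eq_powersetCard_sdiff hE τ hτ]
      _ = lam + lam := by rw [card_filter_subset_image_perm, hreg s hs, hreg _ hτs]
  exact ⟨by omega, lam, hsum⟩
end

section
/- If there exists a 1-subset-regular self-complementary 3-uniform hypergraph on n vertices (with n ≥ 3), then n ≡ 1 (mod 4) or n ≡ 2 (mod 4). -/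
/-!
The permutation `τ` maps the edges through a vertex `v` bijectively onto the non-edges through
`τ v`. With both degrees equal to `λ`, this gives `2λ = C(n - 1, 2)`, and `C(m, 2)` is even
exactly when `m ≡ 0, 1 (mod 4)`.
-/

open Finset

theorem Nat.even_choose_two_iff (m : ℕ) : Even (m.choose 2) ↔ m % 4 = 0 ∨ m % 4 = 1 := by
  induction m using Nat.strong_induction_on with
  | _ m ih =>
    match m with
    | 0 | 1 | 2 | 3 => decide
    | m + 4 =>
      have hstep : (m + 4).choose 2 = m.choose 2 + 2 * (2 * m + 3) := by
        simp only [Nat.choose_succ_succ, Nat.choose_one_right, Nat.choose_zero_right]; ring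
      rw [hstep, Nat.even_add, ih m (by omega)]
      simp only [even_two_mul, iff_true]
      omega

section SelfComplementary

variable {α : Type*} [Fintype α] [DecidableEq α] {E : Finset (Finset α)} {k : ℕ}
  {τ : Equiv.Perm α}

theorem card_edges_containing_eq_card_nonedges_containing_image
    (hE : ∀ e ∈ E, #e = k) (hτ : ∀ e : Finset α, #e = k → (e ∈ E ↔ e.image τ ∉ E))
    (s : Finset α) :
    #(E.filter (s ⊆ ·)) = #{f ∈ powersetCard k univ | s.image τ ⊆ f ∧ f ∉ E} := by
  refine card_nbij' (image τ) (image τ.symm) ?_ ?_ ?_ ?_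
  · intro e he
    simp only [coe_filter, Set.mem_ofPred_eq] at he ⊢
    obtain ⟨heE, hse⟩ := he
    have hk := hE e heE
    exact ⟨mem_powersetCard_univ.2 ((card_image_of_injective e τ.injective).trans hk),
      image_subset_image hse, (hτ e hk).1 heE⟩
  · intro f hf
    simp only [coe_filter, mem_powersetCard_univ, Set.mem_ofPred_eq] at hf ⊢
    obtain ⟨hk, hsf, hfE⟩ := hf
    have hk' : #(f.image τ.symm) = k := (card_image_of_injective f τ.symm.injective).trans hk
    have hf' : (f.image τ.symm).image τ = f := by simp [image_image]
    refine ⟨(hτ _ hk').2 (by rwa [hf']), ?_⟩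
    rwa [← image_subset_image_iff τ.injective, hf']
  · intro e _; simp [image_image]
  · intro f _; simp [image_image]

theorem card_edges_containing_add_card_edges_containing_image
    (hE : ∀ e ∈ E, #e = k) (hτ : ∀ e : Finset α, #e = k → (e ∈ E ↔ e.image τ ∉ E))
    {s : Finset α} (hs : #s ≤ k) :
    #(E.filter (s ⊆ ·)) + #(E.filter (s.image τ ⊆ ·)) =
      (Fintype.card α - #s).choose (k - #s) := by
  have hτs : #(s.image τ) = #s := card_image_of_injective s τ.injective
  have hedges : E.filter (s.image τ ⊆ ·) =
      {f ∈ powersetCard k (univ : Finset α) | s.image τ ⊆ f ∧ f ∈ E} := by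
    ext f
    simp only [mem_filter, mem_powersetCard_univ]
    exact ⟨fun ⟨hfE, hsf⟩ => ⟨hE f hfE, hsf, hfE⟩, fun ⟨_, hsf, hfE⟩ => ⟨hfE, hsf⟩⟩
  rw [card_edges_containing_eq_card_nonedges_containing_image hE hτ, hedges, add_comm,
    ← filter_filter, ← filter_filter, card_filter_add_card_filter_not,
    card_filter_powersetCard_subset _ _ _ (subset_univ _) (hτs.trans_le hs), card_univ, hτs]

end SelfComplementary

/-- If there exists a 1-subset-regular self-complementary 3-uniform hypergraph
on `n` vertices (with `n ≥ 3`), then `n ≡ 1 (mod 4)` or `n ≡ 2 (mod 4)`. -/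
theorem mod_four_of_one_subset_regular_self_complementary (n : ℕ) (hn : 3 ≤ n)
    (h : ∃ E : Finset (Finset (Fin n)),
      (∀ e ∈ E, e.card = 3) ∧
      (∃ τ : Equiv.Perm (Fin n), ∀ e : Finset (Fin n), e.card = 3 →
        (e ∈ E ↔ e.image τ ∉ E)) ∧
      (∃ lam : ℕ, ∀ s : Finset (Fin n), s.card = 1 →
        (E.filter (fun e => s ⊆ e)).card = lam)) :
    n % 4 = 1 ∨ n % 4 = 2 := by
  obtain ⟨E, hE, ⟨τ, hτ⟩, lam, hlam⟩ := h
  let v : Fin n := ⟨0, by omega⟩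
  have hsum := card_edges_containing_add_card_edges_containing_image hE hτ (s := {v}) (by simp)
  rw [hlam {v} (card_singleton v), hlam _ (by simp), card_singleton, Fintype.card_fin] at hsum
  have heven : Even ((n - 1).choose 2) := ⟨lam, hsum.symm⟩
  rw [Nat.even_choose_two_iff] at heven
  omega
end

section
/- For every integer k ≥ 1, the 3-uniform hypergraph Γ_n on n = 4k + 2 vertices is 2-subset-regular with 2-valence 2k; that is, every 2-element subset of its vertex set is contained in exactly 2k edges. -/
/-!
An edge through a pair `s` is `s` plus one further vertex, so it suffices to count the link of `s`:
the vertices `v ∉ s` with `s ∪ {v}` an edge. Since `2` is invertible in `ZMod (2k+1)`, midpoints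
exist and are unique, and the link has `2k` elements in each case:
* `{a₀, b₀}`: the `2k - 1` other vertices of copy `0`, and the midpoint `((a+b)/2)₁`;
* `{a₁, b₁}`: the vertices `c₀` of copy `0` other than the midpoint of `a` and `b`;
* `{a₀, b₁}`: the `c₁` with `c ∉ {b, 2a - b}`, and `(2b - a)₀` when `a ≠ b`.
-/

open scoped Classical

/-- The vertex set of the hypergraph `Γ_n`, `n = 4k + 2`: two copies of `ZMod (2k+1)`,
the second coordinate indicating the copy (so `(a, i)` stands for `a_i`). -/
abbrev GammaVertex (k : ℕ) := ZMod (2 * k + 1) × Fin 2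

/-- `E1`: all 3-element subsets of the first copy of `ZMod (2k+1)`. -/
def GammaE1 (k : ℕ) (e : Finset (GammaVertex k)) : Prop :=
  ∃ a b c : ZMod (2 * k + 1), a ≠ b ∧ a ≠ c ∧ b ≠ c ∧
    e = {(a, 0), (b, 0), (c, 0)}

/-- `E2`: triples `{a₀, b₀, c₁}` with `a ≠ b` and `2c = a + b` in `ZMod (2k+1)`. -/
def GammaE2 (k : ℕ) (e : Finset (GammaVertex k)) : Prop :=
  ∃ a b c : ZMod (2 * k + 1), a ≠ b ∧ 2 * c = a + b ∧
    e = {(a, 0), (b, 0), (c, 1)}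

/-- `E3`: triples `{a₀, b₁, c₁}` with `b ≠ c` and `2a ≠ b + c` in `ZMod (2k+1)`. -/
def GammaE3 (k : ℕ) (e : Finset (GammaVertex k)) : Prop :=
  ∃ a b c : ZMod (2 * k + 1), b ≠ c ∧ 2 * a ≠ b + c ∧
    e = {(a, 0), (b, 1), (c, 1)}

/-- The edge predicate of the 3-uniform hypergraph `Γ_n` on `n = 4k + 2` vertices. -/
def GammaEdge (k : ℕ) (e : Finset (GammaVertex k)) : Prop :=
  GammaE1 k e ∨ GammaE2 k e ∨ GammaE3 k e


open Finset

theorem Finset.eq_or_eq_or_eq_of_triple_eq {α : Type*} [DecidableEq α] {u v w u' v' w' : α}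
    (h : ({u, v, w} : Finset α) = {u', v', w'}) :
    (u = u' ∨ u = v' ∨ u = w') ∧ (v = u' ∨ v = v' ∨ v = w') ∧ (w = u' ∨ w = v' ∨ w = w') ∧
    (u' = u ∨ u' = v ∨ u' = w) ∧ (v' = u ∨ v' = v ∨ v' = w) ∧ (w' = u ∨ w' = v ∨ w' = w) := by
  simp only [Finset.ext_iff, mem_insert, mem_singleton] at h
  refine ⟨(h u).1 ?_, (h v).1 ?_, (h w).1 ?_, (h u').2 ?_, (h v').2 ?_, (h w').2 ?_⟩ <;> simp

section Counting

variable {α : Type*} [Fintype α]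

theorem card_filter_superset_eq_card_filter_insert [DecidableEq α] {P : Finset α → Prop}
    [DecidablePred P] {s : Finset α} (hP : ∀ e, P e → #e = #s + 1) :
    #{e | P e ∧ s ⊆ e} = #{v | v ∉ s ∧ P (insert v s)} := by
  refine (card_bij (fun v _ => insert v s) ?_ ?_ ?_).symm
  · intro v hv
    simp only [mem_filter, mem_univ, true_and] at hv ⊢
    exact ⟨hv.2, subset_insert v s⟩
  · intro v hv w _ hvw
    simp only [mem_filter, mem_univ, true_and] at hv
    exact (insert_inj hv.1).mp hvw
  · intro e he
    simp only [mem_filter, mem_univ, true_and] at he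
    obtain ⟨hPe, hse⟩ := he
    obtain ⟨v, hv⟩ : ∃ v, e \ s = {v} := card_eq_one.mp <| by
      rw [card_sdiff_of_subset hse, hP e hPe]; omega
    have hve : insert v s = e := by rw [← sdiff_union_of_subset hse, hv]; rfl
    have hvs : v ∉ s := (mem_sdiff.mp (hv ▸ mem_singleton_self v)).2
    exact ⟨v, by simpa [hvs, hve] using hPe, hve⟩

theorem card_eq_card_filter_zero_add_card_filter_one [DecidableEq α]
    (t : Finset (α × Fin 2)) :
    #t = #{x | (x, 0) ∈ t} + #{x | (x, 1) ∈ t} := by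
  conv_lhs => rw [← filter_univ_mem t]
  simp only [card_filter, Fintype.sum_prod_type, Fin.sum_univ_two, sum_add_distrib]

theorem card_filter_ne_add_one [DecidableEq α] (a : α) : #{x | x ≠ a} + 1 = Fintype.card α := by
  rw [filter_ne', card_erase_add_one (mem_univ a), card_univ]

theorem card_filter_ne_and_ne_add_two [DecidableEq α] {a b : α} (hab : a ≠ b) :
    #{x | x ≠ a ∧ x ≠ b} + 2 = Fintype.card α := by
  have : ({x | x ≠ a ∧ x ≠ b} : Finset α) = {a, b}ᶜ := by ext; simp
  rw [this, ← card_pair hab, card_compl_add_card]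

theorem card_filter_mul_eq_of_isUnit {M : Type*} [Monoid M] [Fintype M] [DecidableEq M] {u : M}
    (hu : IsUnit u) (t : M) : #{x | u * x = t} = 1 :=
  card_eq_one.mpr ⟨↑hu.unit⁻¹ * t, by ext; simp [Units.eq_inv_mul_iff_mul_eq]⟩

theorem card_filter_mul_ne_add_one_of_isUnit {M : Type*} [Monoid M] [Fintype M] [DecidableEq M]
    {u : M} (hu : IsUnit u) (t : M) : #{x | u * x ≠ t} + 1 = Fintype.card M := by
  rw [← card_filter_mul_eq_of_isUnit hu t, add_comm, card_filter_add_card_filter_not, card_univ]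

end Counting

theorem ZMod.isUnit_two_of_odd (k : ℕ) : IsUnit (2 : ZMod (2 * k + 1)) := by
  simpa using (ZMod.unitOfCoprime 2 (by simp : Nat.Coprime 2 (2 * k + 1))).isUnit

noncomputable def gammaLink (k : ℕ) (s : Finset (GammaVertex k)) : Finset (GammaVertex k) :=
  {v | v ∉ s ∧ GammaEdge k (insert v s)}

section Gamma

variable {k : ℕ}

theorem GammaEdge.card_eq {e : Finset (GammaVertex k)} (he : GammaEdge k e) : #e = 3 := by
  rcases he with ⟨a, b, c, _, _, _, rfl⟩ | ⟨a, b, c, _, _, rfl⟩ | ⟨a, b, c, _, _, rfl⟩ <;>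
    rw [card_eq_three] <;> exact ⟨_, _, _, by simp [*], by simp [*], by simp [*], rfl⟩

theorem mem_gammaLink_zero_zero {a b : ZMod (2 * k + 1)} (hab : a ≠ b) (x : ZMod (2 * k + 1))
    (m : Fin 2) :
    (x, m) ∈ gammaLink k {(a, 0), (b, 0)} ↔
    (m = 0 ∧ x ≠ a ∧ x ≠ b) ∨ (m = 1 ∧ 2 * x = a + b) := by
  simp only [gammaLink, mem_filter, mem_univ, true_and, GammaEdge, GammaE1, GammaE2, GammaE3,
    mem_insert, mem_singleton, Prod.mk.injEq]
  constructor
  · rintro ⟨_, ⟨_, _, _, _, _, _, E⟩ | ⟨_, _, _, _, _, E⟩ | ⟨_, _, _, _, _, E⟩⟩ <;>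
      have := eq_or_eq_or_eq_of_triple_eq E <;> simp only [Prod.mk.injEq] at this <;> grind
  · rintro (⟨rfl, hxa, hxb⟩ | ⟨rfl, hx⟩)
    · exact ⟨by grind, Or.inl ⟨x, a, b, hxa, hxb, hab, rfl⟩⟩
    · exact ⟨by grind, Or.inr (Or.inl ⟨a, b, x, hab, hx, by grind⟩)⟩

theorem mem_gammaLink_zero_one (a b x : ZMod (2 * k + 1)) (m : Fin 2) :
    (x, m) ∈ gammaLink k {(a, 0), (b, 1)} ↔
    (m = 0 ∧ x ≠ a ∧ 2 * b = a + x) ∨ (m = 1 ∧ x ≠ b ∧ 2 * a ≠ b + x) := by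
  simp only [gammaLink, mem_filter, mem_univ, true_and, GammaEdge, GammaE1, GammaE2, GammaE3,
    mem_insert, mem_singleton, Prod.mk.injEq]
  constructor
  · rintro ⟨_, ⟨_, _, _, _, _, _, E⟩ | ⟨_, _, _, _, _, E⟩ | ⟨_, _, _, _, _, E⟩⟩ <;>
      have := eq_or_eq_or_eq_of_triple_eq E <;> simp only [Prod.mk.injEq] at this <;> grind
  · rintro (⟨rfl, hxa, hb⟩ | ⟨rfl, hxb, ha⟩)
    · exact ⟨by grind, Or.inr (Or.inl ⟨a, x, b, hxa.symm, hb, by grind⟩)⟩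
    · exact ⟨by grind, Or.inr (Or.inr ⟨a, b, x, hxb.symm, ha, by grind⟩)⟩

theorem mem_gammaLink_one_one {a b : ZMod (2 * k + 1)} (hab : a ≠ b) (x : ZMod (2 * k + 1))
    (m : Fin 2) : (x, m) ∈ gammaLink k {(a, 1), (b, 1)} ↔ m = 0 ∧ 2 * x ≠ a + b := by
  simp only [gammaLink, mem_filter, mem_univ, true_and, GammaEdge, GammaE1, GammaE2, GammaE3,
    mem_insert, mem_singleton, Prod.mk.injEq]
  constructor
  · rintro ⟨_, ⟨_, _, _, _, _, _, E⟩ | ⟨_, _, _, _, _, E⟩ | ⟨_, _, _, _, _, E⟩⟩ <;>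
      have := eq_or_eq_or_eq_of_triple_eq E <;> simp only [Prod.mk.injEq] at this <;> grind
  · rintro ⟨rfl, hx⟩
    exact ⟨by grind, Or.inr (Or.inr ⟨x, a, b, hab, hx, rfl⟩)⟩

theorem card_gammaLink_zero_zero {a b : ZMod (2 * k + 1)} (hab : a ≠ b) :
    #(gammaLink k {(a, 0), (b, 0)}) = 2 * k := by
  rw [card_eq_card_filter_zero_add_card_filter_one]
  simp only [mem_gammaLink_zero_zero hab]
  simp only [zero_ne_one, one_ne_zero, true_and, false_and, or_false, false_or]
  have h1 := card_filter_ne_and_ne_add_two hab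
  have h2 := card_filter_mul_eq_of_isUnit (ZMod.isUnit_two_of_odd k) (a + b)
  rw [ZMod.card] at h1
  omega

theorem card_gammaLink_one_one {a b : ZMod (2 * k + 1)} (hab : a ≠ b) :
    #(gammaLink k {(a, 1), (b, 1)}) = 2 * k := by
  rw [card_eq_card_filter_zero_add_card_filter_one]
  simp only [mem_gammaLink_one_one hab]
  simp only [one_ne_zero, true_and, false_and, filter_false, card_empty, add_zero]
  have h := card_filter_mul_ne_add_one_of_isUnit (ZMod.isUnit_two_of_odd k) (a + b)
  rw [ZMod.card] at h
  omega

theorem card_gammaLink_zero_one (a b : ZMod (2 * k + 1)) :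
    #(gammaLink k {(a, 0), (b, 1)}) = 2 * k := by
  have hcancel (x y : ZMod (2 * k + 1)) : 2 * x = 2 * y → x = y :=
    (ZMod.isUnit_two_of_odd k).mul_left_cancel
  rw [card_eq_card_filter_zero_add_card_filter_one]
  simp only [mem_gammaLink_zero_one]
  simp only [zero_ne_one, one_ne_zero, true_and, false_and, or_false, false_or]
  by_cases hab : a = b
  · subst hab
    have hfix (x : ZMod (2 * k + 1)) : 2 * a = a + x ↔ x = a := by grind
    simp only [hfix, ne_eq, not_and_self, filter_false, card_empty, zero_add, and_self]
    have h := card_filter_ne_add_one a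
    simp only [ZMod.card, ne_eq] at h
    omega
  · have h0 (x : ZMod (2 * k + 1)) : x ≠ a ∧ 2 * b = a + x ↔ x = 2 * b - a := by
      refine ⟨fun ⟨_, hx⟩ => by linear_combination -hx, ?_⟩
      rintro rfl
      exact ⟨fun h => hab (hcancel b a (by linear_combination h)).symm, by ring⟩
    have h1 (x : ZMod (2 * k + 1)) : x ≠ b ∧ 2 * a ≠ b + x ↔ x ≠ b ∧ x ≠ 2 * a - b := by grind
    simp only [h0, h1, filter_eq', mem_univ, if_true, card_singleton]
    have h := card_filter_ne_and_ne_add_two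
      (show b ≠ 2 * a - b from fun h => hab (hcancel a b (by linear_combination -h)))
    rw [ZMod.card] at h
    omega

end Gamma

theorem gamma_two_subset_regular_general (k : ℕ)
    (s : Finset (GammaVertex k)) (hs : s.card = 2) :
    (Finset.univ.filter (fun e : Finset (GammaVertex k) =>
      GammaEdge k e ∧ s ⊆ e)).card = 2 * k := by
  rw [card_filter_superset_eq_card_filter_insert fun e he => by rw [he.card_eq, hs]]
  change #(gammaLink k s) = 2 * k
  obtain ⟨⟨a, i⟩, ⟨b, j⟩, hne, rfl⟩ := card_eq_two.mp hs
  fin_cases i <;> fin_cases j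
  · exact card_gammaLink_zero_zero fun hab => hne (by rw [hab])
  · exact card_gammaLink_zero_one a b
  · rw [pair_comm]
    exact card_gammaLink_zero_one b a
  · exact card_gammaLink_one_one fun hab => hne (by rw [hab])

/-- For every integer `k ≥ 1`, the 3-uniform hypergraph `Γ_n` on `n = 4k + 2`
vertices is 2-subset-regular with 2-valence `2k`: every 2-element subset of
its vertex set is contained in exactly `2k` edges. -/
theorem gamma_two_subset_regular (k : ℕ) (hk : 1 ≤ k)
    (s : Finset (GammaVertex k)) (hs : s.card = 2) :
    (Finset.univ.filter (fun e : Finset (GammaVertex k) =>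
      GammaEdge k e ∧ s ⊆ e)).card = 2 * k :=
  gamma_two_subset_regular_general k s hs
end

section
/- For every integer k ≥ 1, the map φ on V = Z_{2k+1} × {0, 1} defined by φ(a_i) = a_{i+1} (indices modulo 2, i.e., swapping the two copies of Z_{2k+1}) is an antimorphism of the 3-uniform hypergraph Γ_n: for every 3-element subset e of V, e is an edge of Γ_n if and only if the image of e under φ is not an edge. Consequently, Γ_n is self-complementary. -/
open scoped Classical

/-- The map `φ` swapping the two copies of `ZMod (2k+1)`: `φ(a_i) = a_{i+1}`
(index modulo 2). -/
def GammaSwap (k : ℕ) : Equiv.Perm (GammaVertex k) :=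
  (Equiv.refl (ZMod (2 * k + 1))).prodCongr (Equiv.addRight (1 : Fin 2))

lemma gammaSwap_zero {k : ℕ} (a : ZMod (2*k+1)) : GammaSwap k (a, 0) = (a, 1) := rfl
lemma gammaSwap_one {k : ℕ} (a : ZMod (2*k+1)) : GammaSwap k (a, 1) = (a, 0) := rfl

/-- Helper: sums of pairs agree. -/
lemma sum_of_pair_mem {k : ℕ} {b c b' c' : ZMod (2*k+1)} (hbc : b ≠ c)
    (hb : b = b' ∨ b = c') (hc : c = b' ∨ c = c') : b + c = b' + c' := by
  rcases hb with rfl | rfl <;> rcases hc with rfl | rfl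
  · exact absurd rfl hbc
  · rfl
  · exact add_comm _ _
  · exact absurd rfl hbc

/-- All-ones triples are never edges. -/
lemma not_edge_all_one {k : ℕ} (a b c : ZMod (2*k+1)) :
    ¬ GammaEdge k {(a,1),(b,1),(c,1)} := by
  rintro (⟨a',b',c',h1,h2,h3,he⟩|⟨a',b',c',h1,h2,he⟩|⟨a',b',c',h1,h2,he⟩) <;>
  · have h : ((a',0) : GammaVertex k) ∈ ({(a,1),(b,1),(c,1)} : Finset (GammaVertex k)) :=
      he ▸ (by simp)
    simp [Prod.ext_iff] at h

/-- All-zeros triples of distinct elements are edges. -/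
lemma edge_all_zero {k : ℕ} {a b c : ZMod (2*k+1)} (hab : a ≠ b) (hac : a ≠ c) (hbc : b ≠ c) :
    GammaEdge k {(a,0),(b,0),(c,0)} :=
  Or.inl ⟨a, b, c, hab, hac, hbc, rfl⟩

/-- Characterization of edges of shape `{a₀, b₀, c₁}`. -/
lemma edge_form2 {k : ℕ} (a b c : ZMod (2*k+1)) (hab : a ≠ b) :
    GammaEdge k {(a,0),(b,0),(c,1)} ↔ 2 * c = a + b := by
  constructor
  · rintro (⟨a',b',c',h1,h2,h3,he⟩|⟨a',b',c',h1,h2,he⟩|⟨a',b',c',h1,h2,he⟩)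
    · exfalso
      have h : ((c,1) : GammaVertex k) ∈ ({(a',0),(b',0),(c',0)} : Finset (GammaVertex k)) :=
        he ▸ (by simp)
      simp [Prod.ext_iff] at h
    · -- matching E2 representation
      have hc : ((c,1) : GammaVertex k) ∈ ({(a',0),(b',0),(c',1)} : Finset (GammaVertex k)) :=
        he ▸ (by simp)
      have ha : ((a,0) : GammaVertex k) ∈ ({(a',0),(b',0),(c',1)} : Finset (GammaVertex k)) :=
        he ▸ (by simp)
      have hb : ((b,0) : GammaVertex k) ∈ ({(a',0),(b',0),(c',1)} : Finset (GammaVertex k)) :=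
        he ▸ (by simp)
      simp [Prod.ext_iff] at hc ha hb
      subst hc
      rw [h2]
      exact (sum_of_pair_mem hab ha hb).symm
    · exfalso
      have ha : ((a,0) : GammaVertex k) ∈ ({(a',0),(b',1),(c',1)} : Finset (GammaVertex k)) :=
        he ▸ (by simp)
      have hb : ((b,0) : GammaVertex k) ∈ ({(a',0),(b',1),(c',1)} : Finset (GammaVertex k)) :=
        he ▸ (by simp)
      simp [Prod.ext_iff] at ha hb
      exact hab (ha.trans hb.symm)
  · intro h
    exact Or.inr (Or.inl ⟨a, b, c, hab, h, rfl⟩)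

/-- Characterization of edges of shape `{a₀, b₁, c₁}`. -/
lemma edge_form3 {k : ℕ} (a b c : ZMod (2*k+1)) (hbc : b ≠ c) :
    GammaEdge k {(a,0),(b,1),(c,1)} ↔ 2 * a ≠ b + c := by
  constructor
  · rintro (⟨a',b',c',h1,h2,h3,he⟩|⟨a',b',c',h1,h2,he⟩|⟨a',b',c',h1,h2,he⟩)
    · exfalso
      have h : ((b,1) : GammaVertex k) ∈ ({(a',0),(b',0),(c',0)} : Finset (GammaVertex k)) :=
        he ▸ (by simp)
      simp [Prod.ext_iff] at h
    · exfalso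
      have hb : ((b,1) : GammaVertex k) ∈ ({(a',0),(b',0),(c',1)} : Finset (GammaVertex k)) :=
        he ▸ (by simp)
      have hc : ((c,1) : GammaVertex k) ∈ ({(a',0),(b',0),(c',1)} : Finset (GammaVertex k)) :=
        he ▸ (by simp)
      simp [Prod.ext_iff] at hb hc
      exact hbc (hb.trans hc.symm)
    · -- matching E3 representation
      have ha : ((a,0) : GammaVertex k) ∈ ({(a',0),(b',1),(c',1)} : Finset (GammaVertex k)) :=
        he ▸ (by simp)
      have hb : ((b,1) : GammaVertex k) ∈ ({(a',0),(b',1),(c',1)} : Finset (GammaVertex k)) :=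
        he ▸ (by simp)
      have hc : ((c,1) : GammaVertex k) ∈ ({(a',0),(b',1),(c',1)} : Finset (GammaVertex k)) :=
        he ▸ (by simp)
      simp [Prod.ext_iff] at ha hb hc
      subst ha
      rw [sum_of_pair_mem hbc hb hc]
      exact h2
  · intro h
    exact Or.inr (Or.inr ⟨a, b, c, hbc, h, rfl⟩)

/-- For every `k ≥ 1`, the swap map `φ` is an antimorphism of `Γ_n`: for every
3-element subset `e` of the vertex set, `e` is an edge iff its image under `φ`
is not an edge. Consequently, `Γ_n` is self-complementary, i.e. it admits an
antimorphism. -/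
theorem gammaSwap_antimorphism_and_self_complementary (k : ℕ) (hk : 1 ≤ k) :
    (∀ e : Finset (GammaVertex k), e.card = 3 →
      (GammaEdge k e ↔ ¬ GammaEdge k (e.image (GammaSwap k)))) ∧
    (∃ τ : Equiv.Perm (GammaVertex k), ∀ e : Finset (GammaVertex k), e.card = 3 →
      (GammaEdge k e ↔ ¬ GammaEdge k (e.image τ))) := by
  have main : ∀ e : Finset (GammaVertex k), e.card = 3 →
      (GammaEdge k e ↔ ¬ GammaEdge k (e.image (GammaSwap k))) := by
    intro e he
    obtain ⟨x, y, z, hxy, hxz, hyz, rfl⟩ := Finset.card_eq_three.mp he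
    obtain ⟨a, i⟩ := x
    obtain ⟨b, j⟩ := y
    obtain ⟨c, l⟩ := z
    rw [Finset.image_insert, Finset.image_insert, Finset.image_singleton]
    rcases (show i = 0 ∨ i = 1 from by omega) with rfl | rfl <;>
      rcases (show j = 0 ∨ j = 1 from by omega) with rfl | rfl <;>
      rcases (show l = 0 ∨ l = 1 from by omega) with rfl | rfl <;>
      simp only [gammaSwap_zero, gammaSwap_one]
    -- eight cases, classified by the pattern of second coordinates
    · -- 000
      have hab : a ≠ b := fun h => hxy (by rw [h])
      have hac : a ≠ c := fun h => hxz (by rw [h])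
      have hbc : b ≠ c := fun h => hyz (by rw [h])
      exact iff_of_true (edge_all_zero hab hac hbc) (not_edge_all_one a b c)
    · -- 001
      have hab : a ≠ b := fun h => hxy (by rw [h])
      have h1 : ({(a,1),(b,1),(c,0)} : Finset (GammaVertex k)) = {(c,0),(a,1),(b,1)} := by
        ext v; simp; tauto
      rw [h1, edge_form2 a b c hab, edge_form3 c a b hab]
      exact not_not.symm
    · -- 010
      have hac : a ≠ c := fun h => hxz (by rw [h])
      have h0 : ({(a,0),(b,1),(c,0)} : Finset (GammaVertex k)) = {(a,0),(c,0),(b,1)} := by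
        ext v; simp; tauto
      have h1 : ({(a,1),(b,0),(c,1)} : Finset (GammaVertex k)) = {(b,0),(a,1),(c,1)} := by
        ext v; simp; tauto
      rw [h0, h1, edge_form2 a c b hac, edge_form3 b a c hac]
      exact not_not.symm
    · -- 011
      have hbc : b ≠ c := fun h => hyz (by rw [h])
      have h1 : ({(a,1),(b,0),(c,0)} : Finset (GammaVertex k)) = {(b,0),(c,0),(a,1)} := by
        ext v; simp; tauto
      rw [h1, edge_form3 a b c hbc, edge_form2 b c a hbc]
    · -- 100
      have hbc : b ≠ c := fun h => hyz (by rw [h])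
      have h0 : ({(a,1),(b,0),(c,0)} : Finset (GammaVertex k)) = {(b,0),(c,0),(a,1)} := by
        ext v; simp; tauto
      rw [h0, edge_form2 b c a hbc, edge_form3 a b c hbc]
      exact not_not.symm
    · -- 101
      have hac : a ≠ c := fun h => hxz (by rw [h])
      have h0 : ({(a,1),(b,0),(c,1)} : Finset (GammaVertex k)) = {(b,0),(a,1),(c,1)} := by
        ext v; simp; tauto
      have h1 : ({(a,0),(b,1),(c,0)} : Finset (GammaVertex k)) = {(a,0),(c,0),(b,1)} := by
        ext v; simp; tauto
      rw [h0, h1, edge_form3 b a c hac, edge_form2 a c b hac]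
    · -- 110
      have hab : a ≠ b := fun h => hxy (by rw [h])
      have h0 : ({(a,1),(b,1),(c,0)} : Finset (GammaVertex k)) = {(c,0),(a,1),(b,1)} := by
        ext v; simp; tauto
      rw [h0, edge_form3 c a b hab, edge_form2 a b c hab]
    · -- 111
      have hab : a ≠ b := fun h => hxy (by rw [h])
      have hac : a ≠ c := fun h => hxz (by rw [h])
      have hbc : b ≠ c := fun h => hyz (by rw [h])
      exact iff_of_false (not_edge_all_one a b c)
        (not_not_intro (edge_all_zero hab hac hbc))
  exact ⟨main, GammaSwap k, main⟩
end

section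
/- The hypergraph Γ_6 is vertex-transitive: for every pair of vertices u, v of Γ_6 there exists a permutation σ of the vertex set mapping edges to edges (an automorphism of Γ_6) with σ(u) = v. -/
open scoped Classical

instance (e : Finset (GammaVertex 1)) : Decidable (GammaEdge 1 e) := by
  unfold GammaEdge GammaE1 GammaE2 GammaE3; infer_instance

def IsAuto (σ : Equiv.Perm (GammaVertex 1)) : Prop :=
  ∀ e : Finset (GammaVertex 1), GammaEdge 1 e ↔ GammaEdge 1 (e.image σ)

def T : Equiv.Perm (GammaVertex 1) :=
  ⟨fun x => (x.1 + 1, x.2), fun x => (x.1 - 1, x.2), by decide, by decide⟩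

def Sfun : GammaVertex 1 → GammaVertex 1 := fun x =>
  if x = (0,0) then (0,1) else if x = (1,0) then (0,0) else if x = (2,0) then (1,1)
  else if x = (0,1) then (2,0) else if x = (1,1) then (1,0) else (2,1)

def Sinv : GammaVertex 1 → GammaVertex 1 := fun x =>
  if x = (0,1) then (0,0) else if x = (0,0) then (1,0) else if x = (1,1) then (2,0)
  else if x = (2,0) then (0,1) else if x = (1,0) then (1,1) else (2,1)

def S : Equiv.Perm (GammaVertex 1) := ⟨Sfun, Sinv, by decide, by decide⟩

instance (σ : Equiv.Perm (GammaVertex 1)) : Decidable (IsAuto σ) := by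
  unfold IsAuto; infer_instance

theorem autoT : IsAuto T := by decide
theorem autoS : IsAuto S := by decide

theorem auto_refl : IsAuto (Equiv.refl _) := by
  intro e; simp

theorem auto_symm {σ : Equiv.Perm (GammaVertex 1)} (h : IsAuto σ) : IsAuto σ.symm := by
  intro e
  have h2 := h (e.image σ.symm)
  rw [Finset.image_image, Equiv.self_comp_symm, Finset.image_id] at h2
  exact h2.symm

theorem auto_trans {σ τ : Equiv.Perm (GammaVertex 1)} (hσ : IsAuto σ) (hτ : IsAuto τ) :
    IsAuto (σ.trans τ) := by
  intro e
  rw [Equiv.coe_trans, ← Finset.image_image]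
  exact (hσ e).trans (hτ (e.image σ))

theorem reach0 (v : GammaVertex 1) : ∃ σ : Equiv.Perm (GammaVertex 1), IsAuto σ ∧ σ (0,0) = v := by
  obtain ⟨a, i⟩ := v
  fin_cases a <;> fin_cases i
  · exact ⟨Equiv.refl _, auto_refl, rfl⟩
  · exact ⟨S, autoS, by decide⟩
  · exact ⟨T, autoT, by decide⟩
  · exact ⟨S.trans T, auto_trans autoS autoT, by decide⟩
  · exact ⟨T.trans T, auto_trans autoT autoT, by decide⟩
  · exact ⟨(S.trans T).trans T, auto_trans (auto_trans autoS autoT) autoT, by decide⟩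

/-- The hypergraph `Γ_6` (the case `k = 1`) is vertex-transitive: for every
pair of vertices `u, v` there is a permutation `σ` of the vertex set which is
an automorphism (maps edges exactly to edges) and sends `u` to `v`. -/
theorem gamma_six_vertex_transitive (u v : GammaVertex 1) :
    ∃ σ : Equiv.Perm (GammaVertex 1),
      (∀ e : Finset (GammaVertex 1), GammaEdge 1 e ↔ GammaEdge 1 (e.image σ)) ∧
      σ u = v := by
  obtain ⟨σ1, h1, hu⟩ := reach0 u
  obtain ⟨σ2, h2, hv⟩ := reach0 v
  refine ⟨σ1.symm.trans σ2, auto_trans (auto_symm h1) h2, ?_⟩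
  rw [← hu, Equiv.trans_apply, Equiv.symm_apply_apply]; exact hv
end

section
/- For every integer k ≥ 2 (i.e., n = 4k + 2 > 6), the hypergraph Γ_n is not vertex-transitive: there exist vertices u, v of Γ_n such that no automorphism of Γ_n maps u to v. -/
open scoped Classical

/-- In `ZMod (2k+1)`, multiplication by 2 is injective. -/
lemma gamma_two_cancel (k : ℕ) {x y : ZMod (2 * k + 1)} (h : 2 * x = 2 * y) : x = y := by
  have hs : ((2 * k + 1 : ℕ) : ZMod (2 * k + 1)) = 0 := ZMod.natCast_self _
  push_cast at hs
  linear_combination ((k : ZMod (2 * k + 1)) + 1) * h - (x - y) * hs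

/-- An edge containing two distinct `0`-vertices and a `1`-vertex must be an `E2` edge,
so the `E2` relation holds. -/
lemma gamma_edge_two_zero (k : ℕ) {e : Finset (GammaVertex k)} (h : GammaEdge k e)
    {a b c : ZMod (2 * k + 1)} (hab : a ≠ b)
    (ha : ((a, 0) : GammaVertex k) ∈ e) (hb : ((b, 0) : GammaVertex k) ∈ e)
    (hc : ((c, 1) : GammaVertex k) ∈ e) : 2 * c = a + b := by
  rcases h with ⟨a', b', c', h1, h2, h3, he⟩ | ⟨a', b', c', h1, h2, he⟩ |
    ⟨a', b', c', h1, h2, he⟩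
  · subst he; simp [Prod.ext_iff] at hc
  · subst he
    simp [Prod.ext_iff] at ha hb hc
    rcases ha with ha | ha <;> rcases hb with hb | hb <;> subst ha <;> subst hb <;>
      first
      | exact absurd rfl hab
      | (subst hc; linear_combination h2)
  · subst he
    simp [Prod.ext_iff] at ha hb
    exact absurd (ha.trans hb.symm) hab

/-- No edge contains three distinct `1`-vertices. -/
lemma gamma_no_three_ones (k : ℕ) {e : Finset (GammaVertex k)} (h : GammaEdge k e)
    {x y z : ZMod (2 * k + 1)} (hxy : x ≠ y) (hxz : x ≠ z) (hyz : y ≠ z)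
    (hx : ((x, 1) : GammaVertex k) ∈ e) (hy : ((y, 1) : GammaVertex k) ∈ e)
    (hz : ((z, 1) : GammaVertex k) ∈ e) : False := by
  rcases h with ⟨a', b', c', h1, h2, h3, he⟩ | ⟨a', b', c', h1, h2, he⟩ |
    ⟨a', b', c', h1, h2, he⟩
  · subst he; simp [Prod.ext_iff] at hx
  · subst he
    simp [Prod.ext_iff] at hx hy
    exact hxy (hx.trans hy.symm)
  · subst he
    simp [Prod.ext_iff] at hx hy hz
    rcases hx with hx | hx <;> rcases hy with hy | hy <;> rcases hz with hz | hz <;>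
      first
      | exact hxy (hx.trans hy.symm)
      | exact hxz (hx.trans hz.symm)
      | exact hyz (hy.trans hz.symm)

/-- No `1`-vertex lies in a 4-clique: if `(c,1), p, q, r` are four distinct vertices,
then they cannot all pairwise span edges. -/
lemma gamma_no_clique (k : ℕ) (c : ZMod (2 * k + 1)) (p q r : GammaVertex k)
    (hp : p ≠ (c, 1)) (hq : q ≠ (c, 1)) (hr : r ≠ (c, 1))
    (hpq : p ≠ q) (hpr : p ≠ r) (hqr : q ≠ r)
    (h1 : GammaEdge k {(c, 1), p, q}) (h2 : GammaEdge k {(c, 1), p, r})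
    (h3 : GammaEdge k {(c, 1), q, r}) (h4 : GammaEdge k {p, q, r}) : False := by
  obtain ⟨pa, pi⟩ := p
  obtain ⟨qa, qi⟩ := q
  obtain ⟨ra, ri⟩ := r
  simp only [ne_eq, Prod.mk.injEq, not_and] at hp hq hr hpq hpr hqr
  fin_cases pi <;> fin_cases qi <;> fin_cases ri
  · -- all in copy 0
    have hab : pa ≠ qa := fun h => hpq h rfl
    have e1 : 2 * c = pa + qa := gamma_edge_two_zero k h1 hab (by simp) (by simp) (by simp)
    have e2 : 2 * c = pa + ra := gamma_edge_two_zero k h2 (fun h => hpr h rfl)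
      (by simp) (by simp) (by simp)
    exact hqr (add_left_cancel (e1.symm.trans e2)) rfl
  · -- p,q in copy 0, r in copy 1
    have hab : pa ≠ qa := fun h => hpq h rfl
    have e1 : 2 * c = pa + qa := gamma_edge_two_zero k h1 hab (by simp) (by simp) (by simp)
    have e4 : 2 * ra = pa + qa := gamma_edge_two_zero k h4 hab (by simp) (by simp) (by simp)
    exact hr (gamma_two_cancel k (by linear_combination e4 - e1)) rfl
  · -- p,r in copy 0, q in copy 1
    have hab : pa ≠ ra := fun h => hpr h rfl
    have e2 : 2 * c = pa + ra := gamma_edge_two_zero k h2 hab (by simp) (by simp) (by simp)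
    have e4 : 2 * qa = pa + ra := gamma_edge_two_zero k h4 hab (by simp) (by simp) (by simp)
    exact hq (gamma_two_cancel k (by linear_combination e4 - e2)) rfl
  · -- p in copy 0, q,r in copy 1
    exact gamma_no_three_ones k h3 (fun h => hq h.symm rfl) (fun h => hr h.symm rfl)
      (fun h => hqr h rfl) (by simp) (by simp) (by simp)
  · -- q,r in copy 0, p in copy 1
    have hab : qa ≠ ra := fun h => hqr h rfl
    have e3 : 2 * c = qa + ra := gamma_edge_two_zero k h3 hab (by simp) (by simp) (by simp)
    have e4 : 2 * pa = qa + ra := gamma_edge_two_zero k h4 hab (by simp) (by simp) (by simp)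
    exact hp (gamma_two_cancel k (by linear_combination e4 - e3)) rfl
  · -- q in copy 0, p,r in copy 1
    exact gamma_no_three_ones k h2 (fun h => hp h.symm rfl) (fun h => hr h.symm rfl)
      (fun h => hpr h rfl) (by simp) (by simp) (by simp)
  · -- r in copy 0, p,q in copy 1
    exact gamma_no_three_ones k h1 (fun h => hp h.symm rfl) (fun h => hq h.symm rfl)
      (fun h => hpq h rfl) (by simp) (by simp) (by simp)
  · -- all in copy 1
    exact gamma_no_three_ones k h1 (fun h => hp h.symm rfl) (fun h => hq h.symm rfl)
      (fun h => hpq h rfl) (by simp) (by simp) (by simp)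

/-- Small natural numbers are distinct in `ZMod (2k+1)`. -/
lemma gamma_cast_inj (k : ℕ) {i j : ℕ} (hi : i < 2 * k + 1) (hj : j < 2 * k + 1)
    (h : (i : ZMod (2 * k + 1)) = j) : i = j := by
  haveI : NeZero (2 * k + 1) := ⟨by omega⟩
  have := congrArg ZMod.val h
  rwa [ZMod.val_natCast_of_lt hi, ZMod.val_natCast_of_lt hj] at this

/-- For every `k ≥ 2` (that is, `n = 4k + 2 > 6`), the hypergraph `Γ_n` is not
vertex-transitive: there exist vertices `u, v` such that no automorphism of
`Γ_n` (permutation of the vertices mapping edges exactly to edges) sends `u`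
to `v`. -/
theorem gamma_not_vertex_transitive (k : ℕ) (hk : 2 ≤ k) :
    ∃ u v : GammaVertex k, ∀ σ : Equiv.Perm (GammaVertex k),
      (∀ e : Finset (GammaVertex k), GammaEdge k e ↔ GammaEdge k (e.image σ)) →
      σ u ≠ v := by
  refine ⟨(((0 : ℕ) : ZMod (2 * k + 1)), 0), (((0 : ℕ) : ZMod (2 * k + 1)), 1), ?_⟩
  intro σ hσ hσu
  -- the four vertices 0₀, 1₀, 2₀, 3₀
  set x0 : GammaVertex k := (((0 : ℕ) : ZMod (2 * k + 1)), 0) with hx0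
  set x1 : GammaVertex k := (((1 : ℕ) : ZMod (2 * k + 1)), 0) with hx1
  set x2 : GammaVertex k := (((2 : ℕ) : ZMod (2 * k + 1)), 0) with hx2
  set x3 : GammaVertex k := (((3 : ℕ) : ZMod (2 * k + 1)), 0) with hx3
  have hne : ∀ i j : ℕ, i < 4 → j < 4 → i ≠ j → (i : ZMod (2 * k + 1)) ≠ j := by
    intro i j hi hj hij h
    exact hij (gamma_cast_inj k (by omega) (by omega) h)
  have hd01 := hne 0 1 (by norm_num) (by norm_num) (by norm_num)
  have hd02 := hne 0 2 (by norm_num) (by norm_num) (by norm_num)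
  have hd03 := hne 0 3 (by norm_num) (by norm_num) (by norm_num)
  have hd12 := hne 1 2 (by norm_num) (by norm_num) (by norm_num)
  have hd13 := hne 1 3 (by norm_num) (by norm_num) (by norm_num)
  have hd23 := hne 2 3 (by norm_num) (by norm_num) (by norm_num)
  -- the four triples among them containing x0 (and the last one) are edges
  have he1 : GammaEdge k {x0, x1, x2} := Or.inl ⟨_, _, _, hd01, hd02, hd12, rfl⟩
  have he2 : GammaEdge k {x0, x1, x3} := Or.inl ⟨_, _, _, hd01, hd03, hd13, rfl⟩
  have he3 : GammaEdge k {x0, x2, x3} := Or.inl ⟨_, _, _, hd02, hd03, hd23, rfl⟩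
  have he4 : GammaEdge k {x1, x2, x3} := Or.inl ⟨_, _, _, hd12, hd13, hd23, rfl⟩
  -- their images under σ are edges
  have hi1 := (hσ _).mp he1
  have hi2 := (hσ _).mp he2
  have hi3 := (hσ _).mp he3
  have hi4 := (hσ _).mp he4
  simp only [Finset.image_insert, Finset.image_singleton] at hi1 hi2 hi3 hi4
  rw [hσu] at hi1 hi2 hi3
  -- now σ x1, σ x2, σ x3 form a 4-clique with (0,1): contradiction
  have hinj : ∀ y z : GammaVertex k, y ≠ z → σ y ≠ σ z := fun y z h => σ.injective.ne h
  have hx01 : x0 ≠ x1 := fun h => hd01 (congrArg Prod.fst h)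
  have hx02 : x0 ≠ x2 := fun h => hd02 (congrArg Prod.fst h)
  have hx03 : x0 ≠ x3 := fun h => hd03 (congrArg Prod.fst h)
  have hx12 : x1 ≠ x2 := fun h => hd12 (congrArg Prod.fst h)
  have hx13 : x1 ≠ x3 := fun h => hd13 (congrArg Prod.fst h)
  have hx23 : x2 ≠ x3 := fun h => hd23 (congrArg Prod.fst h)
  refine gamma_no_clique k ((0 : ℕ) : ZMod (2 * k + 1)) (σ x1) (σ x2) (σ x3)
    ?_ ?_ ?_ (hinj _ _ hx12) (hinj _ _ hx13) (hinj _ _ hx23) hi1 hi2 hi3 hi4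
  · rw [← hσu]; exact hinj _ _ (Ne.symm hx01)
  · rw [← hσu]; exact hinj _ _ (Ne.symm hx02)
  · rw [← hσu]; exact hinj _ _ (Ne.symm hx03)
end
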